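/- Let λ > λ' > 0 and let Θ̂ and Θ̂' be graphical lasso solutions at λ and at λ' respectively for S. Then the vertex-partition induced by the connected components of the estimated concentration graph Ĝ^(λ) is nested within (is a refinement of) that induced by the connected components of Ĝ^(λ'): for all vertices i, j ∈ {1,…,p}, if i and j lie in the same connected component of Ĝ^(λ), then they lie in the same connected component of Ĝ^(λ'). -/

import Mathlib

/-!
The components of `concGraph Θ̂` at `λ` coincide with those of the thresholded covariance graph
`covGraph λ S` (edges `|S i j| > λ`), and the components of the latter can only merge as `λ`
decreases.

An edge of `concGraph Θ̂` cannot join two components of `covGraph λ S`: for the sign vector `d`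
of a union of such components and `D = diagonal d`, the matrix `Ψ = (Θ̂ + DΘ̂D)/2` is `Θ̂` with the
entries across the cut deleted. Since `|S x y| ≤ λ` across the cut, the trace and penalty terms do
not increase from `Θ̂` to `Ψ`, while strict log-concavity of `det` makes `det Ψ > det Θ̂` unless
`DΘ̂D = Θ̂`; so minimality forces `Θ̂` to vanish across the cut.

An edge of `covGraph λ S` cannot join two components of `concGraph Θ̂`: otherwise `Θ̂`, hence also
`Θ̂⁻¹`, is block diagonal, and along `Θ̂ + t (E_ij + E_ji)` the penalty grows by `2λ|t|` while
`-log det` has derivative `-(Θ̂⁻¹ i j + Θ̂⁻¹ j i) = 0`, so minimality gives `|S i j| ≤ λ`.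
-/

open Matrix

/-- The graphical lasso objective: `f(Θ) = -log det Θ + tr(AΘ) + λ ∑_{i,j} |Θ_ij|`. -/
noncomputable def glassoObj {n : Type*} [Fintype n] [DecidableEq n]
    (lam : ℝ) (A Θ : Matrix n n ℝ) : ℝ :=
  -Real.log Θ.det + (A * Θ).trace + lam * ∑ i, ∑ j, |Θ i j|

/-- `Θ` is a graphical lasso solution at `lam` for `A`: it is (symmetric) positive definite and
minimizes the graphical lasso objective over all symmetric positive definite matrices.
(Over `ℝ`, `Matrix.PosDef` includes symmetry.) -/
def IsGlassoSol {n : Type*} [Fintype n] [DecidableEq n]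
    (lam : ℝ) (A Θ : Matrix n n ℝ) : Prop :=
  Θ.PosDef ∧ ∀ Ψ : Matrix n n ℝ, Ψ.PosDef → glassoObj lam A Θ ≤ glassoObj lam A Ψ

/-- The thresholded sample covariance graph: an edge between distinct `i, j` iff `|S i j| > lam`. -/
def covGraph {n : Type*} (lam : ℝ) (S : Matrix n n ℝ) : SimpleGraph n :=
  SimpleGraph.fromRel (fun i j => lam < |S i j|)

/-- The estimated concentration graph: an edge between distinct `i, j` iff `Θ i j ≠ 0`. -/
def concGraph {n : Type*} (Θ : Matrix n n ℝ) : SimpleGraph n :=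
  SimpleGraph.fromRel (fun i j => Θ i j ≠ 0)

open Filter Topology

namespace Matrix

variable {n : Type*} [Fintype n] [DecidableEq n]

lemma commute_diagonal_iff {R : Type*} [CommRing R] [NoZeroDivisors R] {A : Matrix n n R}
    {d : n → R} : Commute A (diagonal d) ↔ ∀ x y, d x ≠ d y → A x y = 0 := by
  simp only [commute_iff_eq, ← ext_iff, mul_diagonal, diagonal_mul]
  refine forall₂_congr fun x y => ?_
  rw [mul_comm, eq_comm, ← sub_eq_zero, ← sub_mul, mul_eq_zero, sub_eq_zero, or_iff_not_imp_left]

lemma Commute.nonsing_inv_left {R : Type*} [CommRing R] {A B : Matrix n n R} (hA : IsUnit A)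
    (h : Commute A B) : Commute A⁻¹ B := by
  obtain ⟨u, rfl⟩ := hA
  rw [← coe_units_inv]
  exact h.units_inv_left

lemma midpoint_conj_diagonal_apply (Θ : Matrix n n ℝ) {d : n → ℝ} (hd : ∀ x, d x = 1 ∨ d x = -1)
    (x y : n) :
    (((1 : ℝ) / 2) • (Θ + diagonal d * Θ * diagonal d)) x y = if d x = d y then Θ x y else 0 := by
  have hprod : d x * d y = if d x = d y then 1 else -1 := by
    rcases hd x with hx | hx <;> rcases hd y with hy | hy <;> norm_num [hx, hy]
  calc _ = (1 + d x * d y) / 2 * Θ x y := by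
        simp only [smul_apply, add_apply, mul_diagonal, diagonal_mul, smul_eq_mul]
        ring
    _ = _ := by rw [hprod]; split_ifs <;> ring

lemma diagonal_mul_diagonal_self_of_sign {d : n → ℝ} (hd : ∀ x, d x = 1 ∨ d x = -1) :
    diagonal d * diagonal d = 1 := by
  rw [diagonal_mul_diagonal, ← diagonal_one]
  congr 1
  funext x
  rcases hd x with h | h <;> simp [h]

lemma PosDef.diagonal_mul_mul_diagonal_of_sign {Θ : Matrix n n ℝ} (hΘ : Θ.PosDef) {d : n → ℝ}
    (hd : ∀ x, d x = 1 ∨ d x = -1) : (diagonal d * Θ * diagonal d).PosDef := by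
  have hD := diagonal_mul_diagonal_self_of_sign hd
  have := hΘ.mul_mul_conjTranspose_same (vecMul_injective_of_isUnit ⟨⟨_, _, hD, hD⟩, rfl⟩)
  rwa [diagonal_conjTranspose, star_trivial] at this

lemma det_diagonal_mul_mul_diagonal_of_sign (Θ : Matrix n n ℝ) {d : n → ℝ}
    (hd : ∀ x, d x = 1 ∨ d x = -1) : (diagonal d * Θ * diagonal d).det = Θ.det := by
  rw [det_mul, det_mul, mul_comm, ← mul_assoc, ← det_mul, diagonal_mul_diagonal_self_of_sign hd,
    det_one, one_mul]

lemma PosDef.exists_sqrt {X : Matrix n n ℝ} (hX : X.PosDef) :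
    ∃ T : Matrix n n ℝ, Tᴴ = T ∧ IsUnit T.det ∧ T * T = X := by
  open scoped MatrixOrder in
  have hT : (CFC.sqrt X).PosSemidef := nonneg_iff_posSemidef.mp (CFC.sqrt_nonneg X)
  have hTT : CFC.sqrt X * CFC.sqrt X = X := CFC.sqrt_mul_sqrt_self X hX.posSemidef.nonneg
  refine ⟨CFC.sqrt X, hT.isHermitian, isUnit_iff_ne_zero.2 fun h0 => hX.det_pos.ne' ?_, hTT⟩
  rw [← hTT, det_mul, h0, zero_mul]

lemma IsHermitian.exists_sub_smul_one_posSemidef {M : Matrix n n ℝ} (hM : M.IsHermitian) :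
    ∃ c : ℝ, (M - c • 1).PosSemidef := by
  open scoped MatrixOrder in
  obtain ⟨c, hc⟩ := (finite_real_spectrum (A := M)).bddBelow
  refine ⟨c, ?_⟩
  rw [← Algebra.algebraMap_eq_smul_one, ← le_iff]
  exact (algebraMap_le_iff_le_spectrum hM.isSelfAdjoint).2 fun x hx => hc hx

lemma PosDef.exists_pos_sub_smul_one_posSemidef {A : Matrix n n ℝ} (hA : A.PosDef) :
    ∃ r : ℝ, 0 < r ∧ (A - r • 1).PosSemidef := by
  open scoped MatrixOrder in
  have hpos : ∀ x ∈ spectrum ℝ A, 0 < x :=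
    fun x hx => (isStrictlyPositive_iff_posDef.2 hA).spectrum_pos hx
  have hsmall : ∀ᶠ r in 𝓝[>] (0 : ℝ), ∀ x ∈ spectrum ℝ A, r ≤ x :=
    (eventually_all_finite finite_real_spectrum).2 fun x hx =>
      nhdsWithin_le_nhds ((eventually_lt_nhds (hpos x hx)).mono fun _ h => h.le)
  obtain ⟨r, hr, hr0⟩ := (hsmall.and self_mem_nhdsWithin).exists
  refine ⟨r, hr0, ?_⟩
  rw [← Algebra.algebraMap_eq_smul_one, ← le_iff]
  exact (algebraMap_le_iff_le_spectrum hA.isHermitian.isSelfAdjoint).2 hr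

lemma PosDef.eventually_add_smul {A M : Matrix n n ℝ} (hA : A.PosDef) (hM : M.IsHermitian) :
    ∀ᶠ t in 𝓝 (0 : ℝ), (A + t • M).PosDef := by
  obtain ⟨r, hr, hAr⟩ := hA.exists_pos_sub_smul_one_posSemidef
  obtain ⟨c, hc⟩ := hM.exists_sub_smul_one_posSemidef
  obtain ⟨c', hc'⟩ := hM.neg.exists_sub_smul_one_posSemidef
  have hcont (b : ℝ) : ∀ᶠ t in 𝓝 (0 : ℝ), 0 < r + t * b :=
    continuousAt_const.eventually_lt
      (continuous_const.add (continuous_id.mul continuous_const)).continuousAt (by simpa using hr)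
  filter_upwards [hcont c, hcont (-c')] with t htc htc'
  rcases le_total 0 t with ht | ht
  · have hsplit : A + t • M = (A - r • 1) + t • (M - c • 1) + (r + t * c) • 1 := by module
    rw [hsplit]
    exact .posSemidef_add (hAr.add (hc.smul ht)) (PosDef.one.smul htc)
  · have hsplit : A + t • M = (A - r • 1) + (-t) • (-M - c' • 1) + (r + t * -c') • 1 := by module
    rw [hsplit]
    exact .posSemidef_add (hAr.add (hc'.smul (neg_nonneg.2 ht))) (PosDef.one.smul htc')

lemma hasDerivAt_det_one_add_smul (N : Matrix n n ℝ) :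
    HasDerivAt (fun t : ℝ => (1 + t • N).det) N.trace 0 := by
  set q := (det (1 + (Polynomial.X : Polynomial ℝ) • N.map Polynomial.C)).divX.divX
  have hq : HasDerivAt (fun t => 1 + N.trace * t + q.eval t * t ^ 2) N.trace 0 := by
    refine ((((hasDerivAt_id (0 : ℝ)).const_mul N.trace).const_add 1).add
      ((q.hasDerivAt 0).mul (hasDerivAt_pow 2 (0 : ℝ)))).congr_deriv ?_
    simp
  exact hq.congr_of_eventuallyEq (.of_eq (funext fun t => det_one_add_smul t N))

lemma hasDerivAt_det_add_smul {A : Matrix n n ℝ} (hA : IsUnit A.det) (M : Matrix n n ℝ) :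
    HasDerivAt (fun t : ℝ => (A + t • M).det) (A.det * (A⁻¹ * M).trace) 0 := by
  have hfac (t : ℝ) : A + t • M = A * (1 + t • (A⁻¹ * M)) := by
    rw [mul_add, mul_one, Matrix.mul_smul, mul_nonsing_inv_cancel_left _ _ hA]
  simp_rw [hfac, det_mul]
  exact (hasDerivAt_det_one_add_smul _).const_mul _

lemma PosDef.hasDerivAt_log_det_add_smul {A : Matrix n n ℝ} (hA : A.PosDef) (M : Matrix n n ℝ) :
    HasDerivAt (fun t : ℝ => Real.log (A + t • M).det) (A⁻¹ * M).trace 0 := by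
  have hdet := hA.det_pos
  simpa [hdet.ne'] using (hasDerivAt_det_add_smul hdet.ne'.isUnit M).log (by simpa using hdet.ne')

lemma PosDef.eq_one_of_det_midpoint_sq_le {K : Matrix n n ℝ} (hK : K.PosDef)
    (h : (((1 : ℝ) / 2) • (1 + K)).det ^ 2 ≤ K.det) : K = 1 := by
  set μ := hK.isHermitian.eigenvalues
  set U := Unitary.conjStarAlgAut ℝ _ hK.isHermitian.eigenvectorUnitary
  have hμ : ∀ i, 0 < μ i := hK.eigenvalues_pos
  have hdiag : ((1 : ℝ) / 2) • (1 + K) = U (diagonal fun i => (1 + μ i) / 2) := by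
    conv_lhs => rw [hK.isHermitian.spectral_theorem]
    rw [← map_one U, ← map_add, ← map_smul]
    congr 1
    ext i j
    rcases eq_or_ne i j with rfl | hij
    · simp only [smul_apply, add_apply, one_apply_eq, diagonal_apply_eq, Function.comp_apply,
        RCLike.ofReal_real_eq_id, id, smul_eq_mul]
      ring
    · simp [hij]
  rw [hdiag, det_map, det_diagonal, hK.isHermitian.det_eq_prod_eigenvalues, ← Finset.prod_pow] at h
  simp only [Real.ringHom_apply] at h
  have hamgm (i : n) : μ i ≤ ((1 + μ i) / 2) ^ 2 := by nlinarith [sq_nonneg (1 - μ i)]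
  have hμ1 : ∀ i, μ i = 1 := by
    by_contra! hne
    obtain ⟨i, hi⟩ := hne
    have hlt := Finset.prod_lt_prod (fun j _ => hμ j) (fun j _ => hamgm j)
      ⟨i, Finset.mem_univ i, by nlinarith [sq_pos_of_ne_zero (sub_ne_zero.2 hi)]⟩
    exact (hlt.trans_le h).false
  have hhalf : ((1 : ℝ) / 2) • (1 + K) = 1 := by
    rw [hdiag, ← map_one U]
    norm_num [hμ1]
  calc K = (2 : ℝ) • (((1 : ℝ) / 2) • (1 + K)) - 1 := by module
    _ = 1 := by rw [hhalf]; module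

lemma PosDef.eq_of_det_midpoint_sq_le {X Y : Matrix n n ℝ} (hX : X.PosDef) (hY : Y.PosDef)
    (h : (((1 : ℝ) / 2) • (X + Y)).det ^ 2 ≤ X.det * Y.det) : X = Y := by
  obtain ⟨T, hTh, hT, rfl⟩ := hX.exists_sqrt
  set K := T⁻¹ * Y * T⁻¹
  have hYK : Y = T * K * T := by
    simp only [K, ← mul_assoc, mul_nonsing_inv _ hT, one_mul]
    rw [mul_assoc, nonsing_inv_mul _ hT, mul_one]
  have hK : K.PosDef := by
    have := hY.conjTranspose_mul_mul_same
      (mulVec_injective_of_isUnit ((isUnit_iff_isUnit_det _).2 (isUnit_nonsing_inv_det T hT)))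
    rwa [conjTranspose_nonsing_inv, hTh] at this
  have hmid : ((1 : ℝ) / 2) • (T * T + Y) = T * (((1 : ℝ) / 2) • (1 + K)) * T := by
    rw [hYK, Matrix.mul_smul, Matrix.smul_mul, mul_add, add_mul, mul_one]
  have hTpos : 0 < T.det ^ 4 := by
    have := hT.ne_zero
    positivity
  have hK1 : K = 1 := hK.eq_one_of_det_midpoint_sq_le <| by
    rw [hmid, hYK] at h
    simp only [det_mul] at h
    refine le_of_mul_le_mul_left ?_ hTpos
    linear_combination h
  rw [hYK, hK1, mul_one]

lemma sum_abs_add_smul_single_add_single {Θ : Matrix n n ℝ} {i j : n} (hij : i ≠ j)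
    (hi : Θ i j = 0) (hj : Θ j i = 0) (t : ℝ) :
    ∑ a, ∑ b, |(Θ + t • (single i j 1 + single j i 1) : Matrix n n ℝ) a b|
      = ∑ a, ∑ b, |Θ a b| + 2 * |t| := by
  have hentry (a b : n) : |(Θ + t • (single i j 1 + single j i 1) : Matrix n n ℝ) a b|
      = |Θ a b| + |t| * (single i j 1 + single j i 1 : Matrix n n ℝ) a b := by
    by_cases h1 : i = a ∧ j = b
    · obtain ⟨rfl, rfl⟩ := h1
      simp [hi, hij]
    by_cases h2 : j = a ∧ i = b
    · obtain ⟨rfl, rfl⟩ := h2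
      simp [hj, hij.symm]
    · simp [h1, h2]
  have htwo : ∑ a, ∑ b, (single i j 1 + single j i 1 : Matrix n n ℝ) a b = 2 := by
    simp [single_apply, Finset.sum_add_distrib, ite_and, one_add_one_eq_two]
  simp_rw [hentry, Finset.sum_add_distrib, ← Finset.mul_sum, htwo, mul_comm]

end Matrix

lemma HasDerivAt.abs_le_of_isLocalMin_add_mul_abs {g : ℝ → ℝ} {d c : ℝ} (hg : HasDerivAt g d 0)
    (hmin : IsLocalMin (fun t => g t + c * |t|) 0) : |d| ≤ c := by
  have hslope := hasDerivAt_iff_tendsto_slope_zero.1 hg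
  have hmin' : ∀ᶠ t in 𝓝[≠] 0, g 0 ≤ g t + c * |t| :=
    Eventually.filter_mono nhdsWithin_le_nhds (hmin.mono fun t ht => by simpa using ht)
  have hright : 𝓝[>] (0 : ℝ) ≤ 𝓝[≠] 0 := nhdsWithin_mono _ fun t ht => ne_of_gt ht
  have hleft : 𝓝[<] (0 : ℝ) ≤ 𝓝[≠] 0 := nhdsWithin_mono _ fun t ht => ne_of_lt ht
  rw [abs_le]
  constructor
  · refine ge_of_tendsto (hslope.mono_left hright) ?_
    filter_upwards [hright hmin', self_mem_nhdsWithin] with t ht ht0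
    rw [abs_of_pos ht0] at ht
    simp only [zero_add, smul_eq_mul]
    rw [le_inv_mul_iff₀ ht0]
    linarith
  · refine le_of_tendsto (hslope.mono_left hleft) ?_
    filter_upwards [hleft hmin', self_mem_nhdsWithin] with t ht ht0
    rw [abs_of_neg ht0] at ht
    simp only [zero_add, smul_eq_mul]
    rw [← div_eq_inv_mul, div_le_iff_of_neg ht0]
    linarith

namespace SimpleGraph

variable {V : Type*}

lemma Reachable.of_forall_adj_reachable {G H : SimpleGraph V}
    (h : ∀ a b, G.Adj a b → H.Reachable a b) {u v : V} (huv : G.Reachable u v) :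
    H.Reachable u v := by
  obtain ⟨w⟩ := huv
  induction w with
  | nil => rfl
  | cons hadj _ ih => exact (h _ _ hadj).trans ih

variable (G : SimpleGraph V)

open Classical in
noncomputable def componentSign (a x : V) : ℝ := if G.Reachable a x then 1 else -1

lemma componentSign_eq_one_or (a x : V) : G.componentSign a x = 1 ∨ G.componentSign a x = -1 := by
  unfold componentSign
  split_ifs <;> simp

lemma not_reachable_of_componentSign_ne {a x y : V}
    (h : G.componentSign a x ≠ G.componentSign a y) : ¬G.Reachable x y := fun hxy => by
  have hiff : G.Reachable a x ↔ G.Reachable a y := ⟨(·.trans hxy), (·.trans hxy.symm)⟩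
  by_cases hy : G.Reachable a y
  · simp [componentSign, hy, hiff.2 hy] at h
  · simp [componentSign, hy, mt hiff.1 hy] at h

lemma componentSign_ne_of_not_reachable {a b : V} (h : ¬G.Reachable a b) :
    G.componentSign a a ≠ G.componentSign a b := by
  norm_num [componentSign, h]

end SimpleGraph

variable {n : Type*}

lemma covGraph_antitone (S : Matrix n n ℝ) : Antitone fun lam : ℝ => covGraph lam S := by
  intro lam' lam hle x y hxy
  simp only [covGraph, SimpleGraph.fromRel_adj] at hxy ⊢
  exact ⟨hxy.1, hxy.2.imp (hle.trans_lt ·) (hle.trans_lt ·)⟩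

lemma abs_le_of_not_reachable_covGraph {lam : ℝ} {S : Matrix n n ℝ} {x y : n}
    (h : ¬(covGraph lam S).Reachable x y) : |S x y| ≤ lam := by
  by_contra! hlt
  by_cases hxy : x = y
  · exact h (hxy ▸ .rfl)
  exact h ((SimpleGraph.fromRel_adj _ x y).2 ⟨hxy, Or.inl hlt⟩).reachable

lemma eq_zero_of_not_reachable_concGraph {Θ : Matrix n n ℝ} {x y : n}
    (h : ¬(concGraph Θ).Reachable x y) : Θ x y = 0 := by
  by_contra hne
  by_cases hxy : x = y
  · exact h (hxy ▸ .rfl)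
  exact h ((SimpleGraph.fromRel_adj _ x y).2 ⟨hxy, Or.inl hne⟩).reachable

variable [Fintype n]

lemma trace_mul_add_mul_sum_abs_le_of_apply_eq_ite {lam : ℝ} {S Θ Ψ : Matrix n n ℝ}
    (hΘ : Θ.IsHermitian) {d : n → ℝ} (hS : ∀ x y, d x ≠ d y → |S x y| ≤ lam)
    (hΨ : ∀ x y, Ψ x y = if d x = d y then Θ x y else 0) :
    (S * Ψ).trace + lam * ∑ x, ∑ y, |Ψ x y| ≤ (S * Θ).trace + lam * ∑ x, ∑ y, |Θ x y| := by
  have hentry (x y : n) : S x y * Ψ y x + lam * |Ψ x y| ≤ S x y * Θ y x + lam * |Θ x y| := by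
    rw [hΨ, hΨ]
    by_cases hxy : d x = d y
    · simp [hxy]
    · have hsym : Θ y x = Θ x y := by simpa using hΘ.apply x y
      rw [if_neg hxy, if_neg (Ne.symm hxy), hsym, mul_zero, abs_zero, mul_zero, add_zero]
      have hprod : -(|S x y| * |Θ x y|) ≤ S x y * Θ x y := abs_mul (S x y) (Θ x y) ▸ neg_abs_le _
      linarith [mul_le_mul_of_nonneg_right (hS x y hxy) (abs_nonneg (Θ x y))]
  simp only [trace, diag, mul_apply, Finset.mul_sum, ← Finset.sum_add_distrib]
  exact Finset.sum_le_sum fun x _ => Finset.sum_le_sum fun y _ => hentry x y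

variable [DecidableEq n]

theorem IsGlassoSol.commute_diagonal {lam : ℝ} {S Θ : Matrix n n ℝ} (hsol : IsGlassoSol lam S Θ)
    {d : n → ℝ} (hd : ∀ x, d x = 1 ∨ d x = -1) (hS : ∀ x y, d x ≠ d y → |S x y| ≤ lam) :
    Commute Θ (diagonal d) := by
  obtain ⟨hΘ, hmin⟩ := hsol
  set D := diagonal d
  have hY : (D * Θ * D).PosDef := hΘ.diagonal_mul_mul_diagonal_of_sign hd
  set Ψ := ((1 : ℝ) / 2) • (Θ + D * Θ * D)
  have hΨ : Ψ.PosDef := (hΘ.add hY).smul (by norm_num)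
  have hdet : Ψ.det ≤ Θ.det := by
    have hobj := hmin Ψ hΨ
    have hlin := trace_mul_add_mul_sum_abs_le_of_apply_eq_ite hΘ.isHermitian hS
      (midpoint_conj_diagonal_apply Θ hd)
    rw [← Real.log_le_log_iff hΨ.det_pos hΘ.det_pos]
    simp only [glassoObj] at hobj
    linarith
  have hΘY : Θ = D * Θ * D := hΘ.eq_of_det_midpoint_sq_le hY <| by
    rw [det_diagonal_mul_mul_diagonal_of_sign Θ hd, ← sq]
    exact pow_le_pow_left₀ hΨ.det_pos.le hdet 2
  calc Θ * D = D * Θ * D * D := by rw [← hΘY]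
    _ = D * Θ := by rw [mul_assoc, diagonal_mul_diagonal_self_of_sign hd, mul_one]

theorem IsGlassoSol.abs_sub_inv_le_of_eq_zero {lam : ℝ} {S Θ : Matrix n n ℝ}
    (hsol : IsGlassoSol lam S Θ) {i j : n} (hij : i ≠ j) (hi : Θ i j = 0) (hj : Θ j i = 0) :
    |S i j + S j i - (Θ⁻¹ i j + Θ⁻¹ j i)| ≤ 2 * lam := by
  obtain ⟨hΘ, hmin⟩ := hsol
  set M : Matrix n n ℝ := single i j 1 + single j i 1
  have hM : M.IsHermitian := by simp [M, IsHermitian, add_comm]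
  have htrace (B : Matrix n n ℝ) : (B * M).trace = B i j + B j i := by
    simp [M, mul_add, trace_mul_single, add_comm]
  set g : ℝ → ℝ := fun t => -Real.log (Θ + t • M).det + t * (S i j + S j i)
  have hobj (t : ℝ) : glassoObj lam S (Θ + t • M)
      = g t + 2 * lam * |t| + ((S * Θ).trace + lam * ∑ a, ∑ b, |Θ a b|) := by
    have hpen : ∑ a, ∑ b, |(Θ + t • M) a b| = ∑ a, ∑ b, |Θ a b| + 2 * |t| :=
      sum_abs_add_smul_single_add_single hij hi hj t
    simp only [glassoObj, g, hpen, mul_add, trace_add, Matrix.mul_smul, trace_smul, htrace,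
      smul_eq_mul]
    ring
  have hg : HasDerivAt g (S i j + S j i - (Θ⁻¹ i j + Θ⁻¹ j i)) 0 := by
    have := (hΘ.hasDerivAt_log_det_add_smul M).neg.add
      ((hasDerivAt_id (0 : ℝ)).mul_const (S i j + S j i))
    rw [htrace] at this
    exact this.congr_deriv (by ring)
  refine hg.abs_le_of_isLocalMin_add_mul_abs ?_
  filter_upwards [hΘ.eventually_add_smul hM] with t ht
  have := hmin _ ht
  rw [hobj, ← add_zero Θ, ← zero_smul ℝ M, hobj] at this
  simpa using this

theorem IsGlassoSol.reachable_covGraph_of_adj {lam : ℝ} {S Θ : Matrix n n ℝ}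
    (hsol : IsGlassoSol lam S Θ) {a b : n} (hab : (concGraph Θ).Adj a b) :
    (covGraph lam S).Reachable a b := by
  by_contra hne
  have hcomm := hsol.commute_diagonal (d := (covGraph lam S).componentSign a)
    (SimpleGraph.componentSign_eq_one_or _ a) fun x y hxy =>
      abs_le_of_not_reachable_covGraph (SimpleGraph.not_reachable_of_componentSign_ne _ hxy)
  have hd := SimpleGraph.componentSign_ne_of_not_reachable _ hne
  obtain ⟨-, hab | hba⟩ := (SimpleGraph.fromRel_adj _ a b).1 hab
  · exact hab (commute_diagonal_iff.1 hcomm a b hd)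
  · exact hba (commute_diagonal_iff.1 hcomm b a hd.symm)

theorem IsGlassoSol.reachable_concGraph_of_adj {lam : ℝ} {S Θ : Matrix n n ℝ}
    (hS : S.IsHermitian) (hsol : IsGlassoSol lam S Θ) {i j : n} (hij : (covGraph lam S).Adj i j) :
    (concGraph Θ).Reachable i j := by
  by_contra hne
  set D := diagonal ((concGraph Θ).componentSign i)
  have hcomm : Commute Θ D := commute_diagonal_iff.2 fun x y hxy =>
    eq_zero_of_not_reachable_concGraph (SimpleGraph.not_reachable_of_componentSign_ne _ hxy)
  have hinv : Commute Θ⁻¹ D := hcomm.nonsing_inv_left hsol.1.isUnit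
  have hd := SimpleGraph.componentSign_ne_of_not_reachable _ hne
  obtain ⟨hij', hlt⟩ := (SimpleGraph.fromRel_adj _ i j).1 hij
  have hkkt := hsol.abs_sub_inv_le_of_eq_zero hij' (commute_diagonal_iff.1 hcomm i j hd)
    (commute_diagonal_iff.1 hcomm j i hd.symm)
  have hSji : S j i = S i j := by simpa using hS.apply i j
  rw [commute_diagonal_iff.1 hinv i j hd, commute_diagonal_iff.1 hinv j i hd.symm, hSji,
    add_zero, sub_zero, ← two_mul, abs_mul, abs_two] at hkkt
  rw [hSji, or_self] at hlt
  linarith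

theorem glasso_components_nested_general
    (p : ℕ) (S : Matrix (Fin p) (Fin p) ℝ) (hS : S.PosSemidef)
    (lam lam' : ℝ) (hlt : lam' < lam)
    (Θ Θ' : Matrix (Fin p) (Fin p) ℝ)
    (hΘ : IsGlassoSol lam S Θ) (hΘ' : IsGlassoSol lam' S Θ') :
    ∀ i j : Fin p,
      (concGraph Θ).Reachable i j → (concGraph Θ').Reachable i j := by
  intro i j hreach
  have hcov : (covGraph lam S).Reachable i j :=
    hreach.of_forall_adj_reachable fun _ _ => hΘ.reachable_covGraph_of_adj
  have hcov' : (covGraph lam' S).Reachable i j := hcov.mono (covGraph_antitone S hlt.le)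
  exact hcov'.of_forall_adj_reachable fun _ _ => hΘ'.reachable_concGraph_of_adj hS.isHermitian

/-- the vertex partition induced by the components of the estimated concentration
graph at `lam` refines the one at `lam' < lam`. -/
theorem glasso_components_nested
    (p : ℕ) (hp : 1 ≤ p) (S : Matrix (Fin p) (Fin p) ℝ) (hS : S.PosSemidef)
    (lam lam' : ℝ) (hlam' : 0 < lam') (hlt : lam' < lam)
    (Θ Θ' : Matrix (Fin p) (Fin p) ℝ)
    (hΘ : IsGlassoSol lam S Θ) (hΘ' : IsGlassoSol lam' S Θ') :
    ∀ i j : Fin p,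
      (concGraph Θ).Reachable i j → (concGraph Θ').Reachable i j :=
  glasso_components_nested_general p S hS lam lam' hlt Θ Θ' hΘ hΘ'
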